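/- arXiv:math/0412512 — 2 statements merged into one kernel-verified Lean document; each statement's English description precedes it below -/
import Mathlib

section
/- Let A be a commutative ring, B a faithfully flat A-algebra, and M an A-module. Then the sequence 0 → M → B ⊗_A M → (B ⊗_A B) ⊗_A M is exact, where the first map sends m to 1⊗m and the second is (e₁ − e₂) ⊗ id_M with e₁(b)=b⊗1 and e₂(b)=1⊗b. -/
open TensorProduct

universe u

/-- Let `A` be a commutative ring, `B` a faithfully flat `A`-algebra and `M` an
`A`-module. Then `0 → M → B ⊗[A] M → (B ⊗[A] B) ⊗[A] M` is exact, where the first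
map sends `m` to `1 ⊗ m` and the second is `(e₁ - e₂) ⊗ id_M`, with `e₁ b = b ⊗ 1`
and `e₂ b = 1 ⊗ b`. -/
theorem stmt1 (A B : Type u) [CommRing A] [CommRing B] [Algebra A B]
    [Module.FaithfullyFlat A B]
    (M : Type u) [AddCommGroup M] [Module A M] :
    Function.Injective (TensorProduct.mk A B M 1) ∧
    LinearMap.range (TensorProduct.mk A B M 1) =
      LinearMap.ker (LinearMap.rTensor M
        ((TensorProduct.mk A B B).flip 1 - TensorProduct.mk A B B 1)) := by
  set f : M →ₗ[A] B ⊗[A] M := TensorProduct.mk A B M 1 with hf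
  set g : B ⊗[A] M →ₗ[A] (B ⊗[A] B) ⊗[A] M :=
    LinearMap.rTensor M ((TensorProduct.mk A B B).flip 1 - TensorProduct.mk A B B 1) with hg
  -- contracting homotopies
  let h : B ⊗[A] (B ⊗[A] M) →ₗ[B] B ⊗[A] M :=
    LinearMap.liftBaseChange B (LinearMap.id : B ⊗[A] M →ₗ[A] B ⊗[A] M)
  let h' : B ⊗[A] ((B ⊗[A] B) ⊗[A] M) →ₗ[B] B ⊗[A] (B ⊗[A] M) :=
    LinearMap.liftBaseChange B (TensorProduct.assoc A B B M).toLinearMap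
  have key1 : (h.restrictScalars A) ∘ₗ LinearMap.lTensor B f = LinearMap.id := by
    ext b m
    simp [h, hf, smul_tmul']
  have key2 : LinearMap.lTensor B f ∘ₗ (h.restrictScalars A)
      - (h'.restrictScalars A) ∘ₗ LinearMap.lTensor B g = LinearMap.id := by
    ext b b' m
    simp only [h, h', hf, hg, LinearMap.sub_apply, LinearMap.coe_comp, Function.comp_apply,
      LinearMap.restrictScalars_apply, AlgebraTensorModule.curry_apply,
      TensorProduct.curry_apply, LinearMap.coe_restrictScalars, LinearMap.id_coe, id_eq,
      map_sub, LinearMap.lTensor_tmul, LinearMap.rTensor_tmul, LinearMap.liftBaseChange_tmul,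
      mk_apply, LinearMap.flip_apply, LinearEquiv.coe_coe, TensorProduct.assoc_tmul,
      smul_tmul', smul_eq_mul, mul_one]
    rw [TensorProduct.sub_tmul, map_sub, smul_sub, TensorProduct.assoc_tmul,
      TensorProduct.assoc_tmul, smul_tmul', smul_tmul', smul_eq_mul, smul_eq_mul, mul_one,
      sub_sub_cancel]

  have inj1 : Function.Injective (LinearMap.lTensor B f) := by
    intro x y hxy
    have hx := congrArg (h.restrictScalars A) hxy
    rwa [← LinearMap.comp_apply, ← LinearMap.comp_apply, key1, LinearMap.id_apply,
      LinearMap.id_apply] at hx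
  have exact1 : Function.Exact (0 : M →ₗ[A] M) f := by
    apply Module.FaithfullyFlat.lTensor_reflects_exact A B
    rw [LinearMap.exact_iff, LinearMap.lTensor_zero, LinearMap.range_zero,
      LinearMap.ker_eq_bot]
    exact inj1
  have exact2 : Function.Exact f g := by
    apply Module.FaithfullyFlat.lTensor_reflects_exact A B
    rw [LinearMap.exact_iff]
    apply le_antisymm
    · intro x hx
      rw [LinearMap.mem_ker] at hx
      refine ⟨(h.restrictScalars A) x, ?_⟩
      have := congrArg (fun φ : B ⊗[A] (B ⊗[A] M) →ₗ[A] B ⊗[A] (B ⊗[A] M) => φ x) key2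
      simpa [hx] using this
    · rintro _ ⟨y, rfl⟩
      rw [LinearMap.mem_ker, ← LinearMap.comp_apply, ← LinearMap.lTensor_comp]
      have hgf : g ∘ₗ f = 0 := by
        ext m
        simp [hf, hg, TensorProduct.sub_tmul]
      rw [hgf, LinearMap.lTensor_zero, LinearMap.zero_apply]
  refine ⟨?_, (LinearMap.exact_iff.1 exact2).symm⟩
  rw [← LinearMap.ker_eq_bot, LinearMap.exact_iff.1 exact1, LinearMap.range_zero]
end

section
/- Let A → B be a faithfully flat homomorphism of commutative rings, (N, ψ) an object of the descent category (ψ : N ⊗_A B ≅ B ⊗_A N a B⊗B-module isomorphism with ψ₂ = ψ₁ ∘ ψ₃), and let M = {n ∈ N : ψ(n⊗1) = 1⊗n}. Then the natural B-module homomorphism θ : B ⊗_A M → N, b ⊗ m ↦ bm, is an isomorphism. -/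
open TensorProduct

universe u

variable (A B : Type u) [CommRing A] [CommRing B] [Algebra A B]

/-- `ψ₁ = id_B ⊗ ψ : B ⊗ N ⊗ B → B ⊗ B ⊗ N`. -/
noncomputable def psi1 (N : Type u) [AddCommGroup N] [Module A N]
    (ψ : N ⊗[A] B ≃ₗ[A] B ⊗[A] N) :
    (B ⊗[A] N) ⊗[A] B ≃ₗ[A] (B ⊗[A] B) ⊗[A] N :=
  (TensorProduct.assoc A B N B) ≪≫ₗ
    (TensorProduct.congr (LinearEquiv.refl A B) ψ) ≪≫ₗ
    (TensorProduct.assoc A B B N).symm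

/-- `ψ₂ : N ⊗ B ⊗ B → B ⊗ B ⊗ N`, applying `ψ` to the first and third factors. -/
noncomputable def psi2 (N : Type u) [AddCommGroup N] [Module A N]
    (ψ : N ⊗[A] B ≃ₗ[A] B ⊗[A] N) :
    (N ⊗[A] B) ⊗[A] B ≃ₗ[A] (B ⊗[A] B) ⊗[A] N :=
  ((TensorProduct.assoc A N B B) ≪≫ₗ
      TensorProduct.congr (LinearEquiv.refl A N) (TensorProduct.comm A B B) ≪≫ₗ
      (TensorProduct.assoc A N B B).symm) ≪≫ₗ
    (TensorProduct.congr ψ (LinearEquiv.refl A B)) ≪≫ₗ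
    ((TensorProduct.assoc A B N B) ≪≫ₗ
      TensorProduct.congr (LinearEquiv.refl A B) (TensorProduct.comm A N B) ≪≫ₗ
      (TensorProduct.assoc A B B N).symm)

/-- `ψ₃ = ψ ⊗ id_B : N ⊗ B ⊗ B → B ⊗ N ⊗ B`. -/
noncomputable def psi3 (N : Type u) [AddCommGroup N] [Module A N]
    (ψ : N ⊗[A] B ≃ₗ[A] B ⊗[A] N) :
    (N ⊗[A] B) ⊗[A] B ≃ₗ[A] (B ⊗[A] N) ⊗[A] B :=
  TensorProduct.congr ψ (LinearEquiv.refl A B)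

/-- The `A`-submodule `{n ∈ N : ψ (n ⊗ 1) = 1 ⊗ n}` of descended elements. -/
def descended (N : Type u) [AddCommGroup N] [Module A N]
    (ψ : N ⊗[A] B ≃ₗ[A] B ⊗[A] N) : Submodule A N where
  carrier := {n | ψ (n ⊗ₜ[A] (1 : B)) = (1 : B) ⊗ₜ[A] n}
  add_mem' := by
    intro a b ha hb
    simp only [Set.mem_setOf_eq] at *
    rw [TensorProduct.add_tmul, map_add, ha, hb, TensorProduct.tmul_add]
  zero_mem' := by simp
  smul_mem' := by
    intro c n hn
    simp only [Set.mem_setOf_eq] at *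
    rw [← TensorProduct.smul_tmul', map_smul, hn, TensorProduct.tmul_smul]

/-- Faithfully flat descent: if `A → B` is faithfully flat and `(N, ψ)` is a descent
datum (`ψ : N ⊗ B ≅ B ⊗ N` is `B ⊗ B`-linear and satisfies the cocycle condition
`ψ₂ = ψ₁ ∘ ψ₃`), then with `M = {n : ψ(n ⊗ 1) = 1 ⊗ n}`, the natural `B`-linear map
`θ : B ⊗[A] M → N`, `b ⊗ m ↦ b • m`, is an isomorphism. -/
theorem stmt17 [Module.FaithfullyFlat A B]
    (N : Type u) [AddCommGroup N] [Module A N] [Module B N] [IsScalarTower A B N]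
    (ψ : N ⊗[A] B ≃ₗ[A] B ⊗[A] N)
    (compat : ∀ (b₁ b₂ b : B) (n : N),
      ψ ((b₁ • n) ⊗ₜ[A] (b₂ * b)) =
        TensorProduct.map (LinearMap.mulLeft A b₁)
          (b₂ • (LinearMap.id : N →ₗ[A] N)) (ψ (n ⊗ₜ[A] b)))
    (cocycle : psi2 A B N ψ = (psi3 A B N ψ).trans (psi1 A B N ψ)) :
    Function.Bijective
      (LinearMap.liftBaseChange B (descended A B N ψ).subtype) := by
  classical
  set M := descended A B N ψ with hMdef
  let γ₀ : N →ₗ[A] B ⊗[A] N := ψ.toLinearMap ∘ₗ ((TensorProduct.mk A N B).flip 1)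
  have hγ₀ : ∀ n : N, γ₀ n = ψ (n ⊗ₜ[A] (1 : B)) := fun n => rfl
  let mkOne : N →ₗ[A] B ⊗[A] N := TensorProduct.mk A B N 1
  have hmkOne : ∀ n : N, mkOne n = (1 : B) ⊗ₜ[A] n := fun n => rfl
  let μ : B ⊗[A] N →ₗ[A] N :=
    (LinearMap.liftBaseChange B (LinearMap.id : N →ₗ[A] N)).restrictScalars A
  have hμ : ∀ (b : B) (n : N), μ (b ⊗ₜ[A] n) = b • n := fun b n => rfl
  let χ : N →ₗ[A] N := μ ∘ₗ γ₀
  have compat1 : ∀ (b : B) (n : N),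
      ψ ((b • n) ⊗ₜ[A] (1 : B)) =
        TensorProduct.map (LinearMap.mulLeft A b) LinearMap.id (ψ (n ⊗ₜ[A] (1:B))) := by
    intro b n
    simpa using compat b 1 1 n
  have compat2 : ∀ (n : N) (b : B),
      ψ (n ⊗ₜ[A] b) =
        TensorProduct.map LinearMap.id (b • LinearMap.id) (ψ (n ⊗ₜ[A] (1:B))) := by
    intro n b
    simpa [LinearMap.mulLeft_one] using compat 1 b 1 n
  have hmapμ : ∀ (b : B) (x : B ⊗[A] N),
      μ (TensorProduct.map (LinearMap.mulLeft A b) LinearMap.id x) = b • μ x := by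
    intro b x
    induction x using TensorProduct.induction_on with
    | zero => simp
    | tmul b' n => simp [TensorProduct.map_tmul, hμ, mul_smul]
    | add x y hx hy => simp [map_add, hx, hy, smul_add]
  have hχB : ∀ (b : B) (n : N), χ (b • n) = b • χ n := by
    intro b n
    show μ (ψ ((b • n) ⊗ₜ[A] (1:B))) = b • μ (ψ (n ⊗ₜ[A] (1:B)))
    rw [compat1, hmapμ]
  let d : N →ₗ[A] B ⊗[A] N := γ₀ - mkOne
  have hexact : Function.Exact (M.subtype) d := by
    intro n
    have hd : d n = γ₀ n - mkOne n := rfl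
    rw [hd, sub_eq_zero]
    constructor
    · intro h
      exact ⟨⟨n, h⟩, rfl⟩
    · rintro ⟨m, rfl⟩
      exact m.2
  have hexactB := Module.Flat.lTensor_exact B hexact
  have hι : Function.Injective (LinearMap.lTensor B M.subtype) :=
    Module.Flat.lTensor_preserves_injective_linearMap _ M.injective_subtype
  have h1 : ∀ x : B ⊗[A] N, (TensorProduct.assoc A B B N) (psi1 A B N ψ (x ⊗ₜ[A] (1:B)))
      = LinearMap.lTensor B γ₀ x := by
    intro x
    induction x using TensorProduct.induction_on with
    | zero => simp
    | tmul b n =>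
      simp [psi1, LinearEquiv.trans_apply, TensorProduct.assoc_tmul,
        TensorProduct.congr_tmul, LinearMap.lTensor_tmul, hγ₀]
    | add x y hx hy => rw [TensorProduct.add_tmul, map_add, map_add, map_add, hx, hy]
  have h2' : ∀ x : B ⊗[A] N, (TensorProduct.assoc A B B N)
      (((TensorProduct.assoc A B N B) ≪≫ₗ
        TensorProduct.congr (LinearEquiv.refl A B) (TensorProduct.comm A N B) ≪≫ₗ
        (TensorProduct.assoc A B B N).symm) (x ⊗ₜ[A] (1:B)))
      = LinearMap.lTensor B mkOne x := by
    intro x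
    induction x using TensorProduct.induction_on with
    | zero => simp
    | tmul b n =>
      simp [LinearEquiv.trans_apply, TensorProduct.assoc_tmul, TensorProduct.congr_tmul,
        TensorProduct.comm_tmul, LinearMap.lTensor_tmul, hmkOne]
    | add x y hx hy => rw [TensorProduct.add_tmul, map_add, map_add, map_add, hx, hy]
  have h3 : ∀ n : N, psi3 A B N ψ ((n ⊗ₜ[A] (1:B)) ⊗ₜ[A] (1:B)) = (γ₀ n) ⊗ₜ[A] (1:B) := by
    intro n
    simp [psi3, TensorProduct.congr_tmul, hγ₀]
  have h2 : ∀ n : N, (TensorProduct.assoc A B B N) (psi2 A B N ψ ((n ⊗ₜ[A] (1:B)) ⊗ₜ[A] (1:B)))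
      = LinearMap.lTensor B mkOne (γ₀ n) := by
    intro n
    have e : psi2 A B N ψ ((n ⊗ₜ[A] (1:B)) ⊗ₜ[A] (1:B))
        = ((TensorProduct.assoc A B N B) ≪≫ₗ
            TensorProduct.congr (LinearEquiv.refl A B) (TensorProduct.comm A N B) ≪≫ₗ
            (TensorProduct.assoc A B B N).symm) ((γ₀ n) ⊗ₜ[A] (1:B)) := by
      simp [psi2, LinearEquiv.trans_apply, TensorProduct.assoc_tmul,
        TensorProduct.assoc_symm_tmul, TensorProduct.congr_tmul, TensorProduct.comm_tmul, hγ₀]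
    rw [e, h2' (γ₀ n)]
  have hcoc : ∀ n : N, LinearMap.lTensor B γ₀ (γ₀ n) = LinearMap.lTensor B mkOne (γ₀ n) := by
    intro n
    have e : psi2 A B N ψ ((n ⊗ₜ[A] (1:B)) ⊗ₜ[A] (1:B))
        = psi1 A B N ψ (psi3 A B N ψ ((n ⊗ₜ[A] (1:B)) ⊗ₜ[A] (1:B))) := by
      rw [cocycle]; rfl
    rw [← h1 (γ₀ n), ← h3 n, ← e, h2 n]
  have hχγ : ∀ n : N, LinearMap.lTensor B χ (γ₀ n) = γ₀ n := by
    intro n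
    have hcomp : LinearMap.lTensor B χ
        = (LinearMap.lTensor B μ) ∘ₗ (LinearMap.lTensor B γ₀) :=
      LinearMap.lTensor_comp B μ γ₀
    rw [hcomp, LinearMap.comp_apply, hcoc n, ← LinearMap.comp_apply, ← LinearMap.lTensor_comp]
    have hid : μ ∘ₗ mkOne = LinearMap.id := by
      ext n'
      simp [hμ, hmkOne]
    rw [hid, LinearMap.lTensor_id, LinearMap.id_apply]
  have hcommute : ∀ (b : B) (x : B ⊗[A] N),
      LinearMap.lTensor B χ (TensorProduct.map LinearMap.id (b • LinearMap.id) x)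
      = TensorProduct.map LinearMap.id (b • LinearMap.id) (LinearMap.lTensor B χ x) := by
    intro b x
    induction x using TensorProduct.induction_on with
    | zero => simp
    | tmul b' n =>
      simp [TensorProduct.map_tmul, LinearMap.lTensor_tmul, hχB]
    | add x y hx hy => simp [map_add, hx, hy]
  have hfix : ∀ x : B ⊗[A] N, LinearMap.lTensor B χ x = x := by
    intro x
    obtain ⟨z, rfl⟩ : ∃ z, ψ z = x := ⟨ψ.symm x, ψ.apply_symm_apply x⟩
    induction z using TensorProduct.induction_on with
    | zero => simp
    | tmul n b => rw [compat2 n b, hcommute, ← hγ₀, hχγ]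
    | add z w hz hw => rw [map_add, map_add, hz, hw]
  have hχ : ∀ n : N, χ n = n := by
    have h0 : χ - LinearMap.id = 0 := by
      rw [Module.FaithfullyFlat.zero_iff_lTensor_zero A B (χ - LinearMap.id)]
      apply LinearMap.ext
      intro x
      simp [LinearMap.lTensor_sub, LinearMap.sub_apply, hfix x]
    intro n
    have := DFunLike.congr_fun h0 n
    simpa [sub_eq_zero] using this
  have hθμ : ∀ x : B ⊗[A] M, LinearMap.liftBaseChange B M.subtype x
      = μ (LinearMap.lTensor B M.subtype x) := by
    intro x
    induction x using TensorProduct.induction_on with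
    | zero => simp
    | tmul b m => simp [LinearMap.liftBaseChange_tmul, LinearMap.lTensor_tmul, hμ]
    | add x y hx hy => simp [map_add, hx, hy]
  have hγθ : ∀ x : B ⊗[A] M, γ₀ (LinearMap.liftBaseChange B M.subtype x)
      = LinearMap.lTensor B M.subtype x := by
    intro x
    induction x using TensorProduct.induction_on with
    | zero => simp
    | tmul b m =>
      have hm : ψ ((m : N) ⊗ₜ[A] (1:B)) = (1:B) ⊗ₜ[A] (m : N) := m.2
      rw [LinearMap.liftBaseChange_tmul]
      show ψ ((b • (m : N)) ⊗ₜ[A] (1:B)) = _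
      rw [compat1, hm]
      simp [TensorProduct.map_tmul, LinearMap.lTensor_tmul]
    | add x y hx hy => rw [map_add, map_add, map_add, hx, hy]
  constructor
  · intro x y hxy
    apply hι
    rw [← hγθ x, ← hγθ y]
    exact congrArg γ₀ hxy
  · intro n
    have h0 : LinearMap.lTensor B d (γ₀ n) = 0 := by
      show LinearMap.lTensor B (γ₀ - mkOne) (γ₀ n) = 0
      rw [LinearMap.lTensor_sub, LinearMap.sub_apply, hcoc n, sub_self]
    obtain ⟨y, hy⟩ := (hexactB (γ₀ n)).mp h0
    refine ⟨y, ?_⟩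
    rw [hθμ y, hy]
    exact hχ n
end
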